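/- arXiv:2503.02583 — 5 statements merged into one kernel-verified Lean document; each statement's English description precedes it below -/
import Mathlib

section
/- Let Y, X, Z be finite types, and let p, q be probability mass functions on Y × X × Z with all marginals and conditionals positive. Assume the CPS condition: for all x, y, z, p(x | y, z) = q(x | y, z) (conditional of X given Y, Z agrees). Then for every k ∈ Y and every (x, z), q(y = k | x, z) = p(y = k | x, z) · (q(y = k | z) / p(y = k | z)) / (∑_{l ∈ Y} p(y = l | x, z) · (q(y = l | z) / p(y = l | z))). -/
open Finset

/-!
The CPS condition says `p(y, x, z) / p(y, z) = q(y, x, z) / q(y, z)`, so reweighting `p(y | x, z)`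
by `q(y | z) / p(y | z)` yields `q(y, x, z) · p(z) / (p(x, z) q(z))`, whose second factor does not
depend on `y`. Normalizing over `y` cancels it and leaves `q(y | x, z)`.
-/

theorem div_sum_eq_div_sum_of_eq_mul {ι K : Type*} [Field K] (s : Finset ι) {f g : ι → K}
    {c : K} (hc : c ≠ 0) (h : ∀ i, f i = g i * c) (k : ι) :
    f k / ∑ i ∈ s, f i = g k / ∑ i ∈ s, g i := by
  simp only [h, ← sum_mul, mul_div_mul_right _ _ hc]

theorem div_mul_div_div_div_eq_of_div_eq {K : Type*} [Field K] {a b a' b' P Q R : K}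
    (hb : b ≠ 0) (hb' : b' ≠ 0) (h : a / b = a' / b') :
    a / P * (b' / Q / (b / R)) = a' * (R / (P * Q)) := by
  rw [div_eq_div_iff hb hb'] at h
  calc a / P * (b' / Q / (b / R)) = a * b' / b * (R / (P * Q)) := by
        field_simp
    _ = a' * (R / (P * Q)) := by rw [h, mul_div_assoc, div_self hb, mul_one]

theorem cps_posterior_correction_general {Y X Z : Type*} [Fintype Y] [Fintype X] [Fintype Z]
    (p q : Y → X → Z → ℝ)
    (hp_pos : ∀ y x z, 0 < p y x z) (hq_pos : ∀ y x z, 0 < q y x z)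
    (hCPS : ∀ x y z,
      p y x z / (∑ x', p y x' z) = q y x z / (∑ x', q y x' z)) :
    ∀ (k : Y) (x : X) (z : Z),
      q k x z / (∑ l, q l x z) =
        (p k x z / (∑ l, p l x z)) *
            ((∑ x', q k x' z) / (∑ y', ∑ x', q y' x' z)
              / ((∑ x', p k x' z) / (∑ y', ∑ x', p y' x' z))) /
          ∑ l, (p l x z / (∑ l', p l' x z)) *
            ((∑ x', q l x' z) / (∑ y', ∑ x', q y' x' z)
              / ((∑ x', p l x' z) / (∑ y', ∑ x', p y' x' z))) := by
  intro k x z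
  have hY : (univ : Finset Y).Nonempty := ⟨k, mem_univ k⟩
  have hX : (univ : Finset X).Nonempty := ⟨x, mem_univ x⟩
  have hPy (l : Y) : 0 < ∑ x', p l x' z := sum_pos (fun x' _ => hp_pos l x' z) hX
  have hQy (l : Y) : 0 < ∑ x', q l x' z := sum_pos (fun x' _ => hq_pos l x' z) hX
  have hPx : 0 < ∑ l, p l x z := sum_pos (fun l _ => hp_pos l x z) hY
  have hPZ : 0 < ∑ y', ∑ x', p y' x' z := sum_pos (fun l _ => hPy l) hY
  have hQZ : 0 < ∑ y', ∑ x', q y' x' z := sum_pos (fun l _ => hQy l) hY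
  exact (div_sum_eq_div_sum_of_eq_mul univ (div_pos hPZ (mul_pos hPx hQZ)).ne'
    (fun l => div_mul_div_div_div_eq_of_div_eq (hPy l).ne' (hQy l).ne' (hCPS x l z)) k).symm

/-- **Posterior correction under Conditional Probability Shift (Theorem 1).**
For pmfs `p`, `q` on `Y × X × Z` (written as functions `Y → X → Z → ℝ`) that are
pointwise positive (so all marginals and conditionals are positive), if the CPS
condition `p(x|y,z) = q(x|y,z)` holds, then
`q(y=k|x,z) = p(y=k|x,z)·(q(y=k|z)/p(y=k|z)) / ∑_l p(y=l|x,z)·(q(y=l|z)/p(y=l|z))`. -/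
theorem cps_posterior_correction {Y X Z : Type*} [Fintype Y] [Fintype X] [Fintype Z]
    (p q : Y → X → Z → ℝ)
    (hp_pos : ∀ y x z, 0 < p y x z) (hq_pos : ∀ y x z, 0 < q y x z)
    (hp_sum : ∑ y, ∑ x, ∑ z, p y x z = 1) (hq_sum : ∑ y, ∑ x, ∑ z, q y x z = 1)
    (hCPS : ∀ x y z,
      p y x z / (∑ x', p y x' z) = q y x z / (∑ x', q y x' z)) :
    ∀ (k : Y) (x : X) (z : Z),
      q k x z / (∑ l, q l x z) =
        (p k x z / (∑ l, p l x z)) *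
            ((∑ x', q k x' z) / (∑ y', ∑ x', q y' x' z)
              / ((∑ x', p k x' z) / (∑ y', ∑ x', p y' x' z))) /
          ∑ l, (p l x z / (∑ l', p l' x z)) *
            ((∑ x', q l x' z) / (∑ y', ∑ x', q y' x' z)
              / ((∑ x', p l x' z) / (∑ y', ∑ x', p y' x' z))) :=
  cps_posterior_correction_general p q hp_pos hq_pos hCPS
end

section
/- Let Y, X, Z be finite types and p, q pmfs on Y × X × Z with positive marginals. Under the CPS assumption p(x | y, z) = q(x | y, z), the ratio r(x,z) := p(x | z) / q(x | z) satisfies r(x,z) = (∑_{l ∈ Y} p(y = l | x, z) · q(y = l | z) / p(y = l | z))^{-1} for every (x, z). -/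
open Finset

/-- Under the CPS assumption, the density ratio `r(x,z) = p(x|z)/q(x|z)` equals
the reciprocal of `∑_l p(y=l|x,z)·q(y=l|z)/p(y=l|z)`. -/
theorem cps_density_ratio {Y X Z : Type*} [Fintype Y] [Fintype X] [Fintype Z]
    (p q : Y → X → Z → ℝ)
    (hp_pos : ∀ y x z, 0 < p y x z) (hq_pos : ∀ y x z, 0 < q y x z)
    (hp_sum : ∑ y, ∑ x, ∑ z, p y x z = 1) (hq_sum : ∑ y, ∑ x, ∑ z, q y x z = 1)
    (hCPS : ∀ x y z,
      p y x z / (∑ x', p y x' z) = q y x z / (∑ x', q y x' z)) :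
    ∀ (x : X) (z : Z),
      ((∑ y', p y' x z) / (∑ y', ∑ x', p y' x' z))
        / ((∑ y', q y' x z) / (∑ y', ∑ x', q y' x' z)) =
      (∑ l, (p l x z / (∑ l', p l' x z)) *
          ((∑ x', q l x' z) / (∑ y', ∑ x', q y' x' z))
          / ((∑ x', p l x' z) / (∑ y', ∑ x', p y' x' z)))⁻¹ := by
  intro x z
  have hY : Nonempty Y := by
    by_contra h
    rw [not_nonempty_iff] at h
    simp at hp_sum
  have hX : Nonempty X := by
    by_contra h
    rw [not_nonempty_iff] at h
    simp at hp_sum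
  have hA : 0 < ∑ y', p y' x z := Finset.sum_pos (fun i _ => hp_pos i x z) univ_nonempty
  have hC : 0 < ∑ y', q y' x z := Finset.sum_pos (fun i _ => hq_pos i x z) univ_nonempty
  have hPl : ∀ l, 0 < ∑ x', p l x' z := fun l =>
    Finset.sum_pos (fun i _ => hp_pos l i z) univ_nonempty
  have hQl : ∀ l, 0 < ∑ x', q l x' z := fun l =>
    Finset.sum_pos (fun i _ => hq_pos l i z) univ_nonempty
  have hB : 0 < ∑ y', ∑ x', p y' x' z :=
    Finset.sum_pos (fun i _ => hPl i) univ_nonempty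
  have hD : 0 < ∑ y', ∑ x', q y' x' z :=
    Finset.sum_pos (fun i _ => hQl i) univ_nonempty
  have key : ∀ l, p l x z * (∑ x', q l x' z) = q l x z * (∑ x', p l x' z) := by
    intro l
    have := hCPS x l z
    rw [div_eq_div_iff (hPl l).ne' (hQl l).ne'] at this
    linarith
  have hterm : ∀ l, (p l x z / (∑ l', p l' x z)) *
      ((∑ x', q l x' z) / (∑ y', ∑ x', q y' x' z))
      / ((∑ x', p l x' z) / (∑ y', ∑ x', p y' x' z))
      = q l x z * ((∑ y', ∑ x', p y' x' z) / ((∑ y', p y' x z) * (∑ y', ∑ x', q y' x' z))) := by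
    intro l
    have h2 : p l x z * (∑ x', q l x' z) / (∑ x', p l x' z) = q l x z := by
      rw [key l, mul_div_assoc, div_self (hPl l).ne', mul_one]
    have e1 : (p l x z / (∑ l', p l' x z)) *
        ((∑ x', q l x' z) / (∑ y', ∑ x', q y' x' z))
        / ((∑ x', p l x' z) / (∑ y', ∑ x', p y' x' z))
        = (p l x z * (∑ x', q l x' z) / (∑ x', p l x' z)) *
          ((∑ y', ∑ x', p y' x' z) / ((∑ y', p y' x z) * (∑ y', ∑ x', q y' x' z))) := by
      field_simp
    rw [e1, h2]
  rw [Finset.sum_congr rfl (fun l _ => hterm l), ← Finset.sum_mul]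
  field_simp
end

section
/- Let Y, X, Z be finite types and p, q pmfs on Y × X × Z with positive marginals, satisfying CPS: p(x | y, z) = q(x | y, z) for all x, y, z. Then for every k, x, z: q(y = k | x, z) = p(y = k | x, z) · (p(x | z) / q(x | z)) · (q(y = k | z) / p(y = k | z)). -/
open Finset

/-!
Within the slice `z`, Bayes' theorem gives `q(k | x) = q(k, x) / q(x)`, and CPS says that
`q(k, x) = p(k, x) · q(k) / p(k)`. Substituting, `q(k | x) = p(k, x) · q(k) / (p(k) · q(x))`,
and the normalisations `p(z), q(z)` and the marginal `p(x)` that appear in the right-hand side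
of the identity cancel out.
-/

theorem posterior_tilt_of_div_eq_div {K : Type*} [Field K] {pkx qkx pk qk px qx pz qz : K}
    (hpk : pk ≠ 0) (hqk : qk ≠ 0) (hpx : px ≠ 0) (hpz : pz ≠ 0) (hqz : qz ≠ 0)
    (hcps : pkx / pk = qkx / qk) :
    qkx / qx = pkx / px * ((px / pz) / (qx / qz)) * ((qk / qz) / (pk / pz)) :=
  calc qkx / qx = qkx / qk * qk / qx := by rw [div_mul_cancel₀ _ hqk]
    _ = pkx / pk * qk / qx := by rw [hcps]
    _ = pkx / px * ((px / pz) / (qx / qz)) * ((qk / qz) / (pk / pz)) := by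
      field_simp

theorem Fintype.sum_pos_of_forall_pos {ι R : Type*} [Fintype ι] [Nonempty ι]
    [AddCommMonoid R] [PartialOrder R] [IsOrderedCancelAddMonoid R] {f : ι → R}
    (hf : ∀ i, 0 < f i) : 0 < ∑ i, f i :=
  Finset.sum_pos (fun i _ => hf i) univ_nonempty

theorem cps_posterior_tilt_general {Y X Z : Type*} [Fintype Y] [Fintype X] [Fintype Z]
    (p q : Y → X → Z → ℝ)
    (hp_pos : ∀ y x z, 0 < p y x z) (hq_pos : ∀ y x z, 0 < q y x z)
    (hCPS : ∀ x y z,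
      p y x z / (∑ x', p y x' z) = q y x z / (∑ x', q y x' z)) :
    ∀ (k : Y) (x : X) (z : Z),
      q k x z / (∑ l, q l x z) =
        (p k x z / (∑ l, p l x z)) *
          (((∑ y', p y' x z) / (∑ y', ∑ x', p y' x' z))
            / ((∑ y', q y' x z) / (∑ y', ∑ x', q y' x' z))) *
          (((∑ x', q k x' z) / (∑ y', ∑ x', q y' x' z))
            / ((∑ x', p k x' z) / (∑ y', ∑ x', p y' x' z))) := by
  intro k x z
  have : Nonempty X := ⟨x⟩
  have : Nonempty Y := ⟨k⟩
  have marginal_pos {r : Y → X → Z → ℝ} (hr : ∀ y x z, 0 < r y x z) :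
      0 < ∑ x', r k x' z ∧ 0 < ∑ l, r l x z ∧ 0 < ∑ y', ∑ x', r y' x' z :=
    ⟨Fintype.sum_pos_of_forall_pos (hr k · z), Fintype.sum_pos_of_forall_pos (hr · x z),
      Fintype.sum_pos_of_forall_pos fun y' => Fintype.sum_pos_of_forall_pos (hr y' · z)⟩
  obtain ⟨hpk, hpx, hpz⟩ := marginal_pos hp_pos
  obtain ⟨hqk, -, hqz⟩ := marginal_pos hq_pos
  exact posterior_tilt_of_div_eq_div hpk.ne' hqk.ne' hpx.ne' hpz.ne' hqz.ne' (hCPS x k z)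

/-- Key intermediate identity: under CPS,
`q(y=k|x,z) = p(y=k|x,z) · (p(x|z)/q(x|z)) · (q(y=k|z)/p(y=k|z))`. -/
theorem cps_posterior_tilt {Y X Z : Type*} [Fintype Y] [Fintype X] [Fintype Z]
    (p q : Y → X → Z → ℝ)
    (hp_pos : ∀ y x z, 0 < p y x z) (hq_pos : ∀ y x z, 0 < q y x z)
    (hp_sum : ∑ y, ∑ x, ∑ z, p y x z = 1) (hq_sum : ∑ y, ∑ x, ∑ z, q y x z = 1)
    (hCPS : ∀ x y z,
      p y x z / (∑ x', p y x' z) = q y x z / (∑ x', q y x' z)) :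
    ∀ (k : Y) (x : X) (z : Z),
      q k x z / (∑ l, q l x z) =
        (p k x z / (∑ l, p l x z)) *
          (((∑ y', p y' x z) / (∑ y', ∑ x', p y' x' z))
            / ((∑ y', q y' x z) / (∑ y', ∑ x', q y' x' z))) *
          (((∑ x', q k x' z) / (∑ y', ∑ x', q y' x' z))
            / ((∑ x', p k x' z) / (∑ y', ∑ x', p y' x' z))) :=
  cps_posterior_tilt_general p q hp_pos hq_pos hCPS
end

section
/- Let Θ be a type, let Y be a finite type, and fix finite data indexed by a finite set D. For each θ ∈ Θ, d ∈ D and k ∈ Y let f_θ(k ; d) > 0, and define the pmf q_θ(k ; d) = f_θ(k ; d) / ∑_{l ∈ Y} f_θ(l ; d), so that q_θ(· ; d) is a positive pmf on Y. Define, for parameters θ, θ': Q(θ | θ') = ∑_{d ∈ D} ∑_{k ∈ Y} q_{θ'}(k ; d) · log( f_θ(k ; d) ), and the observed log-likelihood L_obs(θ) = ∑_{d ∈ D} log( ∑_{k ∈ Y} f_θ(k ; d) ). If θ⁺ satisfies Q(θ⁺ | θ') ≥ Q(θ' | θ'), then L_obs(θ⁺) ≥ L_obs(θ'). -/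
open Finset

/-- **EM monotonicity.** With positive complete-data likelihoods `f θ k d`,
responsibilities `f θ k d / ∑ l, f θ l d`, observed log-likelihood
`L_obs θ = ∑ d, log (∑ k, f θ k d)` and surrogate
`Q θ θ' = ∑ d, ∑ k, (f θ' k d / ∑ l, f θ' l d) · log (f θ k d)`,
if `Q θ⁺ θ' ≥ Q θ' θ'`, then `L_obs θ⁺ ≥ L_obs θ'`. -/
theorem em_monotonicity {Θ : Type*} {D Y : Type*} [Fintype D] [Fintype Y]
    (f : Θ → Y → D → ℝ) (hf : ∀ θ k d, 0 < f θ k d)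
    (θplus θ' : Θ)
    (hQ : ∑ d, ∑ k, (f θ' k d / ∑ l, f θ' l d) * Real.log (f θplus k d) ≥
          ∑ d, ∑ k, (f θ' k d / ∑ l, f θ' l d) * Real.log (f θ' k d)) :
    ∑ d, Real.log (∑ k, f θplus k d) ≥ ∑ d, Real.log (∑ k, f θ' k d) := by
  rcases isEmpty_or_nonempty Y with hY | hY
  · simp
  have hS : ∀ θ d, 0 < ∑ l, f θ l d := fun θ d =>
    Finset.sum_pos (fun l _ => hf θ l d) Finset.univ_nonempty
  have hone : ∀ θ d, ∑ k, f θ k d / (∑ l, f θ l d) = 1 := by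
    intro θ d; rw [← Finset.sum_div, div_self (hS θ d).ne']
  have key : ∀ θ d, Real.log (∑ k, f θ k d)
      = (∑ k, (f θ' k d / ∑ l, f θ' l d) * Real.log (f θ k d))
        - ∑ k, (f θ' k d / ∑ l, f θ' l d) * Real.log (f θ k d / ∑ l, f θ l d) := by
    intro θ d
    rw [← Finset.sum_sub_distrib]
    have h : ∀ k : Y, (f θ' k d / ∑ l, f θ' l d) * Real.log (f θ k d)
        - (f θ' k d / ∑ l, f θ' l d) * Real.log (f θ k d / ∑ l, f θ l d)
        = (f θ' k d / ∑ l, f θ' l d) * Real.log (∑ l, f θ l d) := by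
      intro k
      rw [Real.log_div (hf θ k d).ne' (hS θ d).ne']; ring
    simp_rw [h, ← Finset.sum_mul, hone θ' d, one_mul]
  have gibbs : ∀ d,
      ∑ k, (f θ' k d / ∑ l, f θ' l d) * Real.log (f θplus k d / ∑ l, f θplus l d)
      ≤ ∑ k, (f θ' k d / ∑ l, f θ' l d) * Real.log (f θ' k d / ∑ l, f θ' l d) := by
    intro d
    have hq' : ∀ k : Y, 0 < f θ' k d / ∑ l, f θ' l d :=
      fun k => div_pos (hf θ' k d) (hS θ' d)
    have hqp : ∀ k : Y, 0 < f θplus k d / ∑ l, f θplus l d :=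
      fun k => div_pos (hf θplus k d) (hS θplus d)
    have hsum : ∑ k, (f θ' k d / ∑ l, f θ' l d) *
        (Real.log (f θplus k d / ∑ l, f θplus l d)
          - Real.log (f θ' k d / ∑ l, f θ' l d)) ≤ 0 := by
      calc ∑ k, (f θ' k d / ∑ l, f θ' l d) *
            (Real.log (f θplus k d / ∑ l, f θplus l d)
              - Real.log (f θ' k d / ∑ l, f θ' l d))
          = ∑ k, (f θ' k d / ∑ l, f θ' l d) *
              Real.log ((f θplus k d / ∑ l, f θplus l d) / (f θ' k d / ∑ l, f θ' l d)) := by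
            simp_rw [Real.log_div (hqp _).ne' (hq' _).ne']
        _ ≤ ∑ k, (f θ' k d / ∑ l, f θ' l d) *
              ((f θplus k d / ∑ l, f θplus l d) / (f θ' k d / ∑ l, f θ' l d) - 1) :=
            Finset.sum_le_sum fun k _ =>
              mul_le_mul_of_nonneg_left
                (Real.log_le_sub_one_of_pos (div_pos (hqp k) (hq' k))) (hq' k).le
        _ = ∑ k, ((f θplus k d / ∑ l, f θplus l d) - (f θ' k d / ∑ l, f θ' l d)) := by
            refine Finset.sum_congr rfl fun k _ => ?_
            rw [mul_sub, mul_one, mul_div_cancel₀ _ (hq' k).ne']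
        _ = 0 := by
            rw [Finset.sum_sub_distrib, hone θplus d, hone θ' d]; ring
    simp_rw [mul_sub] at hsum
    rw [Finset.sum_sub_distrib] at hsum
    linarith
  simp_rw [key θplus, key θ', Finset.sum_sub_distrib]
  have hg : ∑ d, ∑ k, (f θ' k d / ∑ l, f θ' l d) * Real.log (f θplus k d / ∑ l, f θplus l d)
      ≤ ∑ d, ∑ k, (f θ' k d / ∑ l, f θ' l d) * Real.log (f θ' k d / ∑ l, f θ' l d) :=
    Finset.sum_le_sum fun d _ => gibbs d
  linarith [hQ]
end

section
/- Let Y and Z be finite types, p, q pmfs on Y × Z. If Y and Z are independent under both p and q (i.e., p(y,z) = p(y)p(z) and q(y,z) = q(y)q(z)), and the marginals of Z agree (p(z) = q(z) for all z), and additionally given a third finite type X and joint pmfs p̃, q̃ on Y × X × Z extending p, q with p̃(x | y, z) = q̃(x | y, z), then the label-shift condition holds: p̃(x, z | y) = q̃(x, z | y) for all x, z, y with p(y), q(y) > 0. -/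
open Finset

/-- If `y ⟂ z` under both `p` and `q` (pmfs on `Y × Z`), the `z`-marginals agree,
and joint pmfs `p̃`, `q̃` on `Y × X × Z` extend `p`, `q` (marginalizing over `X`)
and satisfy the CPS condition `p̃(x|y,z) = q̃(x|y,z)`, then the label-shift
condition holds: `p̃(x,z|y) = q̃(x,z|y)` for all `x, z, y` with `p(y), q(y) > 0`. -/
theorem label_shift_of_independence_and_cps {Y X Z : Type*}
    [Fintype Y] [Fintype X] [Fintype Z]
    (p q : Y → Z → ℝ) (pt qt : Y → X → Z → ℝ)
    (hp_sum : ∑ y, ∑ z, p y z = 1) (hq_sum : ∑ y, ∑ z, q y z = 1)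
    (hpt_pos : ∀ y x z, 0 < pt y x z) (hqt_pos : ∀ y x z, 0 < qt y x z)
    (hpt_sum : ∑ y, ∑ x, ∑ z, pt y x z = 1) (hqt_sum : ∑ y, ∑ x, ∑ z, qt y x z = 1)
    (hp_ext : ∀ y z, ∑ x, pt y x z = p y z)
    (hq_ext : ∀ y z, ∑ x, qt y x z = q y z)
    (hp_indep : ∀ y z, p y z = (∑ z', p y z') * (∑ y', p y' z))
    (hq_indep : ∀ y z, q y z = (∑ z', q y z') * (∑ y', q y' z))
    (hz_eq : ∀ z, ∑ y', p y' z = ∑ y', q y' z)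
    (hCPS : ∀ x y z,
      pt y x z / (∑ x', pt y x' z) = qt y x z / (∑ x', qt y x' z)) :
    ∀ (x : X) (z : Z) (y : Y), 0 < ∑ z', p y z' → 0 < ∑ z', q y z' →
      pt y x z / (∑ x', ∑ z', pt y x' z') =
        qt y x z / (∑ x', ∑ z', qt y x' z') := by
  intro x z y hA hB
  have hswap_p : ∑ x', ∑ z', pt y x' z' = ∑ z', p y z' := by
    rw [Finset.sum_comm]; simp [hp_ext]
  have hswap_q : ∑ x', ∑ z', qt y x' z' = ∑ z', q y z' := by
    rw [Finset.sum_comm]; simp [hq_ext]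
  have hpz : 0 < p y z := by
    rw [← hp_ext]
    exact Finset.sum_pos (fun i _ => hpt_pos y i z) ⟨x, Finset.mem_univ x⟩
  have hm : 0 < ∑ y', p y' z := by
    have h := hp_indep y z
    nlinarith
  have h1 : ∑ x', pt y x' z = (∑ z', p y z') * (∑ y', p y' z) := by
    rw [hp_ext, ← hp_indep]
  have h2 : ∑ x', qt y x' z = (∑ z', q y z') * (∑ y', p y' z) := by
    rw [hq_ext, hq_indep, hz_eq]
  have hc := hCPS x y z
  rw [h1, h2] at hc
  rw [hswap_p, hswap_q]
  have hm' := hm.ne'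
  have hA' := hA.ne'
  have hB' := hB.ne'
  field_simp at hc ⊢
  nlinarith [hc, hm, mul_pos hA hB]
end
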